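/- arXiv:2012.05572 — 8 statements merged into one kernel-verified Lean document; each statement's English description precedes it below -/
import Mathlib

section
/- If X = X₁ × X₂ × X₃ is such a product and the dynamics have the cherry structure ẋ₁ = f₁(x₁), ẋ₂ = f₂(x₁,x₂), ẋ₃ = f₃(x₁,x₃), then the maximum positively invariant set M₊ of the full system in X equals {(x₁,x₂,x₃) ∈ X : (x₁,x₂) ∈ M₊², (x₁,x₃) ∈ M₊³}, where M₊² and M₊³ are the MPI sets of the subsystems (x₁,x₂) in X₁×X₂ and (x₁,x₃) in X₁×X₃ respectively. -/
/-!
The projections `(x₁, x₂, x₃) ↦ (x₁, x₂)` and `(x₁, x₂, x₃) ↦ (x₁, x₃)` semiconjugate the full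
flow to the two subsystem flows, and the product constraint set is the intersection of the
preimages of `X₁ × X₂` and `X₁ × X₃`. Taking the maximum positively invariant set commutes both
with intersections and with preimages under such semiconjugacies, and `M₊ ⊆ X` because `φ 0 = id`.
-/

open Set

variable {τ α β : Type*} [Zero τ]

section LE

variable [LE τ]

/-- The maximum positively invariant (MPI) set of `φ` in `X`. -/
def mpiSet (φ : τ → α → α) (X : Set α) : Set α :=
  {x | ∀ t ≥ (0 : τ), φ t x ∈ X}

theorem mpiSet_inter (φ : τ → α → α) (A B : Set α) :
    mpiSet φ (A ∩ B) = mpiSet φ A ∩ mpiSet φ B := by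
  ext x
  exact ⟨fun h => ⟨fun t ht => (h t ht).1, fun t ht => (h t ht).2⟩,
    fun h t ht => ⟨h.1 t ht, h.2 t ht⟩⟩

theorem preimage_mpiSet_of_semiconj {φ : τ → α → α} {ψ : τ → β → β} {π : α → β}
    (hπ : ∀ t ≥ (0 : τ), ∀ x, ψ t (π x) = π (φ t x)) (Y : Set β) :
    π ⁻¹' mpiSet ψ Y = mpiSet φ (π ⁻¹' Y) := by
  ext x
  exact forall₂_congr fun t ht => by rw [mem_preimage, hπ t ht]

end LE

section Preorder

variable [Preorder τ]

theorem mpiSet_subset {φ : τ → α → α} (hφ0 : ∀ x, φ 0 x = x) (X : Set α) :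
    mpiSet φ X ⊆ X := fun x hx => hφ0 x ▸ hx 0 le_rfl

theorem mpiSet_cherry {γ : Type*} {φ : τ → α × β × γ → α × β × γ} {φ₂ : τ → α × β → α × β}
    {φ₃ : τ → α × γ → α × γ} (hφ0 : ∀ x, φ 0 x = x)
    (hcomm₂ : ∀ t ≥ (0 : τ), ∀ x, φ₂ t (x.1, x.2.1) = ((φ t x).1, (φ t x).2.1))
    (hcomm₃ : ∀ t ≥ (0 : τ), ∀ x, φ₃ t (x.1, x.2.2) = ((φ t x).1, (φ t x).2.2))
    (X₁ : Set α) (X₂ : Set β) (X₃ : Set γ) :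
    mpiSet φ (X₁ ×ˢ (X₂ ×ˢ X₃)) = X₁ ×ˢ (X₂ ×ˢ X₃) ∩
      ((fun x : α × β × γ => (x.1, x.2.1)) ⁻¹' mpiSet φ₂ (X₁ ×ˢ X₂) ∩
        (fun x : α × β × γ => (x.1, x.2.2)) ⁻¹' mpiSet φ₃ (X₁ ×ˢ X₃)) := by
  have hX : X₁ ×ˢ (X₂ ×ˢ X₃) = (fun x : α × β × γ => (x.1, x.2.1)) ⁻¹' (X₁ ×ˢ X₂) ∩
      (fun x : α × β × γ => (x.1, x.2.2)) ⁻¹' (X₁ ×ˢ X₃) := by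
    ext x
    simp only [mem_prod, mem_inter_iff, mem_preimage]
    tauto
  rw [preimage_mpiSet_of_semiconj hcomm₂, preimage_mpiSet_of_semiconj hcomm₃, ← mpiSet_inter,
    ← hX, inter_eq_right.mpr (mpiSet_subset hφ0 _)]

end Preorder

/-- for the cherry-structured system `ẋ₁=f₁(x₁), ẋ₂=f₂(x₁,x₂), ẋ₃=f₃(x₁,x₃)`
with product constraint set `X = X₁ × X₂ × X₃`, the MPI set of the full system equals
`{(x₁,x₂,x₃) ∈ X : (x₁,x₂) ∈ M₊², (x₁,x₃) ∈ M₊³}` where `M₊²`, `M₊³` are the MPI sets of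
the subsystems (whose flows commute with the projections). -/
theorem cherry_MPI_decomposition (n₁ n₂ n₃ : ℕ)
    (X₁ : Set (Fin n₁ → ℝ)) (X₂ : Set (Fin n₂ → ℝ)) (X₃ : Set (Fin n₃ → ℝ))
    (φ : ℝ → ((Fin n₁ → ℝ) × (Fin n₂ → ℝ) × (Fin n₃ → ℝ)) →
        ((Fin n₁ → ℝ) × (Fin n₂ → ℝ) × (Fin n₃ → ℝ)))
    (φ₂ : ℝ → ((Fin n₁ → ℝ) × (Fin n₂ → ℝ)) → ((Fin n₁ → ℝ) × (Fin n₂ → ℝ)))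
    (φ₃ : ℝ → ((Fin n₁ → ℝ) × (Fin n₃ → ℝ)) → ((Fin n₁ → ℝ) × (Fin n₃ → ℝ)))
    (hφ0 : ∀ x, φ 0 x = x)
    (hcomm₂ : ∀ t ≥ (0 : ℝ), ∀ x, φ₂ t (x.1, x.2.1) = ((φ t x).1, (φ t x).2.1))
    (hcomm₃ : ∀ t ≥ (0 : ℝ), ∀ x, φ₃ t (x.1, x.2.2) = ((φ t x).1, (φ t x).2.2)) :
    {x | ∀ t ≥ (0 : ℝ), φ t x ∈ X₁ ×ˢ (X₂ ×ˢ X₃)} =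
    {x ∈ X₁ ×ˢ (X₂ ×ˢ X₃) |
      (x.1, x.2.1) ∈ {y | ∀ t ≥ (0 : ℝ), φ₂ t y ∈ X₁ ×ˢ X₂} ∧
      (x.1, x.2.2) ∈ {y | ∀ t ≥ (0 : ℝ), φ₃ t y ∈ X₁ ×ˢ X₃}} :=
  mpiSet_cherry hφ0 hcomm₂ hcomm₃ X₁ X₂ X₃
end

section
/- There exists a dynamical system and a compact constraint set X not of product form for which the MPI set of the full system is empty while the MPI set of a subsystem with respect to a fixed slice of X is nonempty: for ẋ₁ = 0, ẋ₂ = −x₁x₂, ẋ₃ = x₁x₃(1−x₃) on X = {(x₁,x₂,x₃) : x₁,x₃ ∈ [1/2,1], x₂ ∈ [0,1], x₂ ≥ x₃ − 1/2}, every trajectory starting in X eventually leaves X (so M₊ = ∅), while every trajectory of the (x₁,x₂)-subsystem starting in the slice X_{1,2}(1/2) = [1/2,1]×[0,1] remains in it for all t ≥ 0. -/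
/-!
Along any solution `x₁` is a constant `a ∈ [1/2, 1]` and `x₂(t) = x₂(0) e^{-a t}` decays to `0`.
If the full trajectory stayed in `X`, the coupling constraint `x₃ ≤ x₂ + 1/2` would eventually
trap `x₃` in `[1/2, 3/5]`, where the logistic growth rate `a x₃ (1 - x₃)` is bounded below by a
positive constant, so `x₃` would grow without bound. The slice `[1/2, 1] × [0, 1]` of the
subsystem has no such coupling and is invariant, since `x₂` only decays.
-/

open Real Filter Set

theorem HasDerivAt.fst {E F : Type*} [NormedAddCommGroup E] [NormedSpace ℝ E]
    [NormedAddCommGroup F] [NormedSpace ℝ F] {γ : ℝ → E × F} {v : E × F} {t : ℝ}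
    (h : HasDerivAt γ v t) : HasDerivAt (fun s ↦ (γ s).1) v.1 t := by
  simpa using h.hasFDerivAt.fst.hasDerivAt

theorem HasDerivAt.snd {E F : Type*} [NormedAddCommGroup E] [NormedSpace ℝ E]
    [NormedAddCommGroup F] [NormedSpace ℝ F] {γ : ℝ → E × F} {v : E × F} {t : ℝ}
    (h : HasDerivAt γ v t) : HasDerivAt (fun s ↦ (γ s).2) v.2 t := by
  simpa using h.hasFDerivAt.snd.hasDerivAt

theorem eq_of_forall_hasDerivAt_zero {g : ℝ → ℝ} (h : ∀ t, HasDerivAt g 0 t) (t : ℝ) :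
    g t = g 0 :=
  is_const_of_deriv_eq_zero (fun s ↦ (h s).differentiableAt) (fun s ↦ (h s).deriv) t 0

theorem eq_mul_exp_of_forall_hasDerivAt_mul {g : ℝ → ℝ} {a : ℝ}
    (h : ∀ t, HasDerivAt g (a * g t) t) (t : ℝ) : g t = g 0 * exp (a * t) := by
  have hconst : ∀ s, HasDerivAt (fun s ↦ g s * exp (-(a * s))) 0 s := fun s ↦ by
    have hexp : HasDerivAt (fun s ↦ exp (-(a * s))) (exp (-(a * s)) * -(a * 1)) s :=
      (((hasDerivAt_id s).const_mul a).neg).exp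
    exact ((h s).fun_mul hexp).congr_deriv (by ring)
  have := eq_of_forall_hasDerivAt_zero hconst t
  simp only [mul_zero, neg_zero, exp_zero, mul_one] at this
  rw [← this, mul_assoc, ← exp_add, neg_add_cancel, exp_zero, mul_one]

theorem decay_subsystem_solution {u v : ℝ → ℝ} (hu : ∀ t, HasDerivAt u 0 t)
    (hv : ∀ t, HasDerivAt v (-u t * v t) t) (t : ℝ) :
    u t = u 0 ∧ v t = v 0 * exp (-u 0 * t) := by
  have hu_const := eq_of_forall_hasDerivAt_zero hu
  refine ⟨hu_const t, eq_mul_exp_of_forall_hasDerivAt_mul (fun s ↦ ?_) t⟩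
  simpa only [hu_const s] using hv s

theorem decay_subsystem_mem_Icc {u v : ℝ → ℝ} (hu : ∀ t, HasDerivAt u 0 t)
    (hv : ∀ t, HasDerivAt v (-u t * v t) t) (hu₀ : 0 ≤ u 0) (hv₀ : 0 ≤ v 0) {t : ℝ}
    (ht : 0 ≤ t) : v t ∈ Icc 0 (v 0) := by
  rw [(decay_subsystem_solution hu hv t).2]
  have hexp_le : exp (-u 0 * t) ≤ 1 := exp_le_one_iff.2 (by nlinarith)
  exact ⟨by positivity, mul_le_of_le_one_right hv₀ hexp_le⟩

theorem decay_subsystem_tendsto_zero {u v : ℝ → ℝ} (hu : ∀ t, HasDerivAt u 0 t)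
    (hv : ∀ t, HasDerivAt v (-u t * v t) t) (hu₀ : 0 < u 0) :
    Tendsto v atTop (nhds 0) := by
  have hexp : Tendsto (fun t ↦ exp (-u 0 * t)) atTop (nhds 0) := by
    simpa only [neg_mul, Function.comp_def, id] using
      tendsto_exp_neg_atTop_nhds_zero.comp (tendsto_id.const_mul_atTop hu₀)
  have hv_eq : v = fun t ↦ v 0 * exp (-u 0 * t) :=
    funext fun t ↦ (decay_subsystem_solution hu hv t).2
  rw [hv_eq]
  simpa only [mul_zero] using hexp.const_mul (v 0)

theorem logistic_not_forall_mem_Icc {w : ℝ → ℝ} {a c d T : ℝ} (ha : 0 < a) (hc : 0 < c)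
    (hd : d < 1) (hw : ∀ t, HasDerivAt w (a * w t * (1 - w t)) t) :
    ¬ ∀ t ≥ T, w t ∈ Icc c d := by
  intro hmem
  set C := a * (c * (1 - d))
  have hC : 0 < C := mul_pos ha (mul_pos hc (by linarith))
  have hgrowth : ∀ t ≥ T, C * (t - T) ≤ w t - w T := by
    intro t ht
    refine (convex_Ici T).mul_sub_le_image_sub_of_le_deriv
      (fun s _ ↦ (hw s).continuousAt.continuousWithinAt)
      (fun s _ ↦ (hw s).differentiableAt.differentiableWithinAt)
      (fun s hs ↦ ?_) T self_mem_Ici t ht ht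
    rw [interior_Ici] at hs
    obtain ⟨hcs, hsd⟩ := hmem s hs.out.le
    rw [(hw s).deriv, mul_assoc]
    exact mul_le_mul_of_nonneg_left (by nlinarith) ha.le
  obtain ⟨hcT, hTd⟩ := hmem T le_rfl
  have hstep : 0 < (d - c + 1) / C := div_pos (by linarith) hC
  have hgrowth_end := hgrowth (T + (d - c + 1) / C) (by linarith)
  have hend := (hmem (T + (d - c + 1) / C) (by linarith)).2
  rw [add_sub_cancel_left, mul_div_cancel₀ _ hC.ne'] at hgrowth_end
  linarith

/-- for `ẋ₁=0, ẋ₂=−x₁x₂, ẋ₃=x₁x₃(1−x₃)` on the non-product constraint set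
`X = {x₁,x₃ ∈ [1/2,1], x₂ ∈ [0,1], x₂ ≥ x₃ − 1/2}` every trajectory starting in `X`
eventually leaves `X` (so the MPI set is empty), while every trajectory of the
`(x₁,x₂)`-subsystem starting in the slice `X_{1,2}(1/2) = [1/2,1] × [0,1]` stays there
for all `t ≥ 0`. -/
theorem nonproduct_MPI_counterexample :
    (∀ x ∈ {p : ℝ × ℝ × ℝ | p.1 ∈ Set.Icc (1/2 : ℝ) 1 ∧ p.2.2 ∈ Set.Icc (1/2 : ℝ) 1 ∧
        p.2.1 ∈ Set.Icc (0 : ℝ) 1 ∧ p.2.1 ≥ p.2.2 - 1/2},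
      ∀ γ : ℝ → ℝ × ℝ × ℝ, γ 0 = x →
        (∀ t : ℝ, HasDerivAt γ
          (0, -(γ t).1 * (γ t).2.1, (γ t).1 * (γ t).2.2 * (1 - (γ t).2.2)) t) →
        ∃ t ≥ (0 : ℝ), γ t ∉ {p : ℝ × ℝ × ℝ | p.1 ∈ Set.Icc (1/2 : ℝ) 1 ∧
          p.2.2 ∈ Set.Icc (1/2 : ℝ) 1 ∧ p.2.1 ∈ Set.Icc (0 : ℝ) 1 ∧ p.2.1 ≥ p.2.2 - 1/2}) ∧
    (∀ p ∈ Set.Icc (1/2 : ℝ) 1 ×ˢ Set.Icc (0 : ℝ) 1,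
      ∀ γ : ℝ → ℝ × ℝ, γ 0 = p →
        (∀ t : ℝ, HasDerivAt γ (0, -(γ t).1 * (γ t).2) t) →
        ∀ t ≥ (0 : ℝ), γ t ∈ Set.Icc (1/2 : ℝ) 1 ×ˢ Set.Icc (0 : ℝ) 1) := by
  constructor
  · rintro x ⟨hx₁, -⟩ γ rfl hγ
    by_contra! hstay
    have hu : ∀ t, HasDerivAt (fun t ↦ (γ t).1) 0 t := fun t ↦ (hγ t).fst
    have hv : ∀ t, HasDerivAt (fun t ↦ (γ t).2.1) (-(γ t).1 * (γ t).2.1) t :=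
      fun t ↦ (hγ t).snd.fst
    have hw : ∀ t, HasDerivAt (fun t ↦ (γ t).2.2)
        ((γ 0).1 * (γ t).2.2 * (1 - (γ t).2.2)) t := fun t ↦ by
      simpa only [(decay_subsystem_solution hu hv t).1] using (hγ t).snd.snd
    have ha : 0 < (γ 0).1 := by linarith [hx₁.1]
    obtain ⟨T, hv_small⟩ := eventually_atTop.1 <|
      (decay_subsystem_tendsto_zero hu hv ha).eventually_lt_const (by norm_num : (0 : ℝ) < 1/10)
    refine logistic_not_forall_mem_Icc (c := 1/2) (d := 3/5) (T := max T 0) ha (by norm_num)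
      (by norm_num) hw fun t ht ↦ ?_
    obtain ⟨-, ⟨hw_ge, -⟩, -, hcoupling⟩ := hstay t (le_of_max_le_right ht)
    exact ⟨hw_ge, by linarith [hv_small t (le_of_max_le_left ht)]⟩
  · rintro p ⟨hp₁, hp₂⟩ γ rfl hγ t ht
    have hu : ∀ t, HasDerivAt (fun t ↦ (γ t).1) 0 t := fun t ↦ (hγ t).fst
    have hv : ∀ t, HasDerivAt (fun t ↦ (γ t).2) (-(γ t).1 * (γ t).2) t := fun t ↦ (hγ t).snd
    have hv_mem := decay_subsystem_mem_Icc hu hv (by linarith [hp₁.1]) hp₂.1 ht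
    refine ⟨?_, hv_mem.1, hv_mem.2.trans hp₂.2⟩
    simpa only [(decay_subsystem_solution hu hv t).1] using hp₁
end

section
/- Under the same acyclic sparsity assumptions and product structure X = X₁ × ⋯ × X_r, X_T = X_{1,T} × ⋯ × X_{r,T}, the finite-time region of attraction satisfies R_T = {x ∈ X : x_{P(x_i)} ∈ R_T^i for each leaf x_i}, where R_T^i is the region of attraction of the subsystem induced by the past of leaf x_i with target set the corresponding product of X_{j,T}. -/
/-!
A trajectory stays in a product set iff each of its coordinates does, and every block of
coordinates lies in the past of some leaf. The subsystem induced by that past evolves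
exactly as the projection of the full flow, so the constraints on the full system split
into the constraints on the subsystems; the condition `x ∈ X` is the trajectory constraint
at `t = 0`.
-/

open Set

def finiteTimeROA {α : Type*} (φ : ℝ → α → α) (T : ℝ) (X XT : Set α) : Set α :=
  {x | (∀ t ∈ Icc 0 T, φ t x ∈ X) ∧ φ T x ∈ XT}

section FiniteTimeROA

variable {α β : Type*} {φ : ℝ → α → α} {T : ℝ}

theorem finiteTimeROA_subset {X XT : Set α} (hφ0 : ∀ x, φ 0 x = x) (hT : 0 ≤ T) :
    finiteTimeROA φ T X XT ⊆ X := fun x hx => hφ0 x ▸ hx.1 0 ⟨le_rfl, hT⟩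

theorem finiteTimeROA_iInter {κ : Type*} (X XT : κ → Set α) :
    finiteTimeROA φ T (⋂ r, X r) (⋂ r, XT r) = ⋂ r, finiteTimeROA φ T (X r) (XT r) := by
  ext x
  simp only [finiteTimeROA, mem_ofPred_eq, mem_iInter, forall_and]
  exact and_congr_left' ⟨fun h r t ht => h t ht r, fun h t ht r => h r t ht⟩

theorem preimage_finiteTimeROA {π : α → β} {ψ : ℝ → β → β} (hT : 0 ≤ T)
    (hπ : ∀ t ≥ (0 : ℝ), ∀ x, ψ t (π x) = π (φ t x)) (Y YT : Set β) :
    π ⁻¹' finiteTimeROA ψ T Y YT = finiteTimeROA φ T (π ⁻¹' Y) (π ⁻¹' YT) := by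
  ext x
  simp only [finiteTimeROA, mem_preimage, mem_ofPred_eq]
  refine and_congr (forall₂_congr fun t ht => ?_) ?_
  · rw [hπ t ht.1]
  · rw [hπ T hT]

end FiniteTimeROA

theorem Set.pi_univ_eq_iInter_preimage_restrict {ι κ : Type*} {β : ι → Type*}
    {I : κ → Finset ι} (hI : ∀ j, ∃ r, j ∈ I r) (S : ∀ j, Set (β j)) :
    univ.pi S = ⋂ r, (I r).restrict ⁻¹' univ.pi fun j : I r => S j := by
  ext x
  simp only [mem_univ_pi, mem_iInter, mem_preimage, Finset.restrict]
  refine ⟨fun hx r j => hx j, fun hx j => ?_⟩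
  obtain ⟨r, hr⟩ := hI j
  exact hx r ⟨j, hr⟩

theorem sparse_ROA_decomposition_general (N l : ℕ) (d : Fin N → ℕ) (T : ℝ) (hT : 0 ≤ T)
    (Xs XTs : ∀ j, Set (Fin (d j) → ℝ))
    (I : Fin l → Finset (Fin N)) (hcover : ∀ j : Fin N, ∃ r, j ∈ I r)
    (φ : ℝ → (∀ j, Fin (d j) → ℝ) → (∀ j, Fin (d j) → ℝ))
    (φsub : ∀ r : Fin l, ℝ → (∀ j : {j // j ∈ I r}, Fin (d j.1) → ℝ) →
        (∀ j : {j // j ∈ I r}, Fin (d j.1) → ℝ))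
    (hφ0 : ∀ x, φ 0 x = x)
    (hcomm : ∀ r : Fin l, ∀ t ≥ (0 : ℝ), ∀ x : ∀ j, Fin (d j) → ℝ,
        φsub r t (fun j => x j.1) = fun j : {j // j ∈ I r} => φ t x j.1) :
    {x | (∀ t ∈ Set.Icc (0 : ℝ) T, ∀ j, φ t x j ∈ Xs j) ∧ ∀ j, φ T x j ∈ XTs j} =
    {x | (∀ j, x j ∈ Xs j) ∧
      ∀ r : Fin l, (fun j : {j // j ∈ I r} => x j.1) ∈
        {y | (∀ t ∈ Set.Icc (0 : ℝ) T, ∀ j : {j // j ∈ I r}, φsub r t y j ∈ Xs j.1) ∧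
          ∀ j : {j // j ∈ I r}, φsub r T y j ∈ XTs j.1}} := by
  have hROA : finiteTimeROA φ T (univ.pi Xs) (univ.pi XTs) =
      ⋂ r, (I r).restrict ⁻¹' finiteTimeROA (φsub r) T
        (univ.pi fun j : I r => Xs j) (univ.pi fun j : I r => XTs j) := by
    rw [pi_univ_eq_iInter_preimage_restrict hcover Xs,
      pi_univ_eq_iInter_preimage_restrict hcover XTs, finiteTimeROA_iInter]
    exact iInter_congr fun r => (preimage_finiteTimeROA hT (hcomm r) _ _).symm
  have hmem : ∀ x, x ∈ finiteTimeROA φ T (univ.pi Xs) (univ.pi XTs) ↔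
      x ∈ univ.pi Xs ∧ ∀ r, (I r).restrict x ∈ finiteTimeROA (φsub r) T
        (univ.pi fun j : I r => Xs j) (univ.pi fun j : I r => XTs j) := fun x =>
    ⟨fun hx => ⟨finiteTimeROA_subset hφ0 hT hx, mem_iInter.1 (hROA ▸ hx)⟩,
      fun hx => hROA ▸ mem_iInter.2 hx.2⟩
  ext x
  have hx := hmem x
  simp only [finiteTimeROA, mem_univ_pi, mem_ofPred_eq] at hx
  exact hx

/-- sparse decomposition of the finite-time region of attraction. With the
product constraint set `X = ∏ Xs j`, product target set `X_T = ∏ XTs j`, and the pasts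
`I r` of the leaves of the acyclic sparsity graph (covering all blocks, each inducing a
subsystem whose flow commutes with the projection), the ROA of the full system equals
`{x ∈ X : x_{I r} ∈ R_T^r for all r}`. -/
theorem sparse_ROA_decomposition (N l : ℕ) (d : Fin N → ℕ) (T : ℝ) (hT : 0 ≤ T)
    (Xs XTs : ∀ j, Set (Fin (d j) → ℝ))
    (hXc : ∀ j, IsCompact (Xs j)) (hXTc : ∀ j, IsCompact (XTs j))
    (I : Fin l → Finset (Fin N)) (hcover : ∀ j : Fin N, ∃ r, j ∈ I r)
    (φ : ℝ → (∀ j, Fin (d j) → ℝ) → (∀ j, Fin (d j) → ℝ))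
    (φsub : ∀ r : Fin l, ℝ → (∀ j : {j // j ∈ I r}, Fin (d j.1) → ℝ) →
        (∀ j : {j // j ∈ I r}, Fin (d j.1) → ℝ))
    (hφ0 : ∀ x, φ 0 x = x)
    (hcomm : ∀ r : Fin l, ∀ t ≥ (0 : ℝ), ∀ x : ∀ j, Fin (d j) → ℝ,
        φsub r t (fun j => x j.1) = fun j : {j // j ∈ I r} => φ t x j.1) :
    {x | (∀ t ∈ Set.Icc (0 : ℝ) T, ∀ j, φ t x j ∈ Xs j) ∧ ∀ j, φ T x j ∈ XTs j} =
    {x | (∀ j, x j ∈ Xs j) ∧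
      ∀ r : Fin l, (fun j : {j // j ∈ I r} => x j.1) ∈
        {y | (∀ t ∈ Set.Icc (0 : ℝ) T, ∀ j : {j // j ∈ I r}, φsub r t y j ∈ Xs j.1) ∧
          ∀ j : {j // j ∈ I r}, φsub r T y j ∈ XTs j.1}} :=
  sparse_ROA_decomposition_general N l d T hT Xs XTs I hcover φ φsub hφ0 hcomm
end

section
/- Suppose S ⊆ ℝⁿ is compact and given by S = {x ∈ X : x_{I_r} ∈ S^r for r = 1,…,l} with each S^r compact. Suppose for each r a sequence of compact outer approximations S^r_k ⊇ S^r satisfies Hausdorff-distance convergence dist(S^r_k, S^r) → 0 as k → ∞, and the sets S^r_k are uniformly bounded. Define S'_k = {x ∈ X : x_{I_r} ∈ S^r_k for r = 1,…,l}. Then dist(S'_k, S) → 0 as k → ∞. -/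
/-!
Let `g x = ∑ r, infDist x_{I r} Sʳ`. It is continuous and vanishes on `X` exactly on `S`, so by
compactness of `X` it is bounded below by some `δ > 0` on the points of `X` at distance `≥ ε`
from `S`. A point of `S'_k` has `g x ≤ ∑ r, dist(Sʳ_k, Sʳ)`, which is `< δ` for large `k`; hence
`S'_k` lies in the `ε`-neighbourhood of `S ⊆ S'_k`.
-/

open Metric Filter Topology

section

variable {α : Type*} [PseudoMetricSpace α]

theorem IsCompact.exists_pos_forall_infDist_lt {X S : Set α} (hX : IsCompact X) {g : α → ℝ}
    (hg : Continuous g) (hpos : ∀ x ∈ X, x ∉ S → 0 < g x) {ε : ℝ} (hε : 0 < ε) :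
    ∃ δ > 0, ∀ x ∈ X, g x < δ → infDist x S < ε := by
  set K := X ∩ {x | ε ≤ infDist x S}
  have hK : IsCompact K := hX.inter_right (isClosed_le continuous_const (continuous_infDist_pt S))
  have hposK : ∀ x ∈ K, 0 < g x := fun x hx =>
    hpos x hx.1 fun hxS => by linarith [show ε ≤ infDist x S from hx.2, infDist_zero_of_mem hxS]
  obtain ⟨δ, hδ, hδK⟩ := hK.exists_forall_le' hg.continuousOn hposK
  refine ⟨δ, hδ, fun x hx hgx => ?_⟩
  by_contra! hxε
  exact (hδK x ⟨hx, hxε⟩).not_gt hgx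

theorem infDist_le_hausdorffDist_of_subset {s t : Set α} {y : α} (hy : y ∈ t) (hst : s ⊆ t)
    (ht : Bornology.IsBounded t) : infDist y s ≤ hausdorffDist t s := by
  rcases s.eq_empty_or_nonempty with rfl | hs
  · simp
  · exact infDist_le_hausdorffDist_of_mem hy
      (hausdorffEDist_ne_top_of_nonempty_of_bounded ⟨y, hy⟩ hs ht (ht.subset hst))

end

theorem sum_infDist_pos {ι : Type*} [Fintype ι] {β : ι → Type*} [∀ r, PseudoMetricSpace (β r)]
    {T : ∀ r, Set (β r)} (hT : ∀ r, IsClosed (T r)) (hne : ∀ r, (T r).Nonempty)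
    {y : ∀ r, β r} (hy : ∃ r, y r ∉ T r) : 0 < ∑ r, infDist (y r) (T r) := by
  obtain ⟨r, hr⟩ := hy
  exact Finset.sum_pos' (fun _ _ => infDist_nonneg)
    ⟨r, Finset.mem_univ r, ((hT r).notMem_iff_infDist_pos (hne r)).1 hr⟩

theorem IsCompact.tendsto_hausdorffDist_of_outer_approx {α ι γ : Type*} [PseudoMetricSpace α]
    [Fintype ι] {β : ι → Type*} [∀ r, PseudoMetricSpace (β r)] {L : Filter γ}
    {X : Set α} (hX : IsCompact X) {p : ∀ r, α → β r} (hp : ∀ r, Continuous (p r))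
    {T : ∀ r, Set (β r)} (hT : ∀ r, IsClosed (T r))
    {T' : ∀ r, γ → Set (β r)} (hT' : ∀ r k, Bornology.IsBounded (T' r k))
    (hsub : ∀ r k, T r ⊆ T' r k)
    (hconv : ∀ r, Tendsto (fun k => hausdorffDist (T' r k) (T r)) L (𝓝 0)) :
    Tendsto (fun k => hausdorffDist {x ∈ X | ∀ r, p r x ∈ T' r k} {x ∈ X | ∀ r, p r x ∈ T r})
      L (𝓝 0) := by
  set S := {x ∈ X | ∀ r, p r x ∈ T r}
  rcases S.eq_empty_or_nonempty with hS | ⟨x₀, hx₀⟩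
  · simp only [hS, hausdorffDist_empty]
    exact tendsto_const_nhds
  set g : α → ℝ := fun x => ∑ r, infDist (p r x) (T r)
  have hg : Continuous g := by fun_prop
  have hgpos : ∀ x ∈ X, x ∉ S → 0 < g x := fun x hx hxS =>
    sum_infDist_pos hT (fun r => ⟨_, hx₀.2 r⟩) (by simpa [S, hx] using hxS)
  have hsum : Tendsto (fun k => ∑ r, hausdorffDist (T' r k) (T r)) L (𝓝 0) := by
    simpa using tendsto_finsetSum Finset.univ fun r _ => hconv r
  refine Metric.tendsto_nhds.2 fun ε hε => ?_
  obtain ⟨δ, hδ, hδS⟩ := hX.exists_pos_forall_infDist_lt hg hgpos (half_pos hε)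
  filter_upwards [hsum.eventually (gt_mem_nhds hδ)] with k hk
  have hfar : ∀ x ∈ {x ∈ X | ∀ r, p r x ∈ T' r k}, infDist x S ≤ ε / 2 := fun x hx =>
    (hδS x hx.1 <| (Finset.sum_le_sum fun r _ =>
      infDist_le_hausdorffDist_of_subset (hx.2 r) (hsub r k) (hT' r k)).trans_lt hk).le
  have hnear : ∀ x ∈ S, infDist x {x ∈ X | ∀ r, p r x ∈ T' r k} ≤ ε / 2 := fun x hx =>
    (infDist_zero_of_mem (s := {x ∈ X | ∀ r, p r x ∈ T' r k})
      ⟨hx.1, fun r => hsub r k (hx.2 r)⟩).trans_le (half_pos hε).le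
  rw [Real.dist_0_eq_abs, abs_of_nonneg hausdorffDist_nonneg]
  exact (hausdorffDist_le_of_infDist (half_pos hε).le hfar hnear).trans_lt (half_lt_self hε)

theorem glued_hausdorff_convergence_general (n l : ℕ) (X : Set (Fin n → ℝ)) (hX : IsCompact X)
    (I : Fin l → Finset (Fin n))
    (Sr : ∀ r : Fin l, Set ({i // i ∈ I r} → ℝ)) (hSrc : ∀ r, IsCompact (Sr r))
    (Srk : ∀ r : Fin l, ℕ → Set ({i // i ∈ I r} → ℝ))
    (hSrkc : ∀ r k, IsCompact (Srk r k))
    (houter : ∀ r k, Sr r ⊆ Srk r k)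
    (hconv : ∀ r, Filter.Tendsto (fun k => Metric.hausdorffDist (Srk r k) (Sr r))
        Filter.atTop (nhds 0))
    (S : Set (Fin n → ℝ))
    (hS : S = {x ∈ X | ∀ r : Fin l, (fun i : {i // i ∈ I r} => x i.1) ∈ Sr r}) :
    Filter.Tendsto (fun k => Metric.hausdorffDist
        {x ∈ X | ∀ r : Fin l, (fun i : {i // i ∈ I r} => x i.1) ∈ Srk r k} S)
      Filter.atTop (nhds 0) := by
  subst hS
  exact hX.tendsto_hausdorffDist_of_outer_approx (fun r => by fun_prop)
    (fun r => (hSrc r).isClosed) (fun r k => (hSrkc r k).isBounded) houter hconv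

/-- if compact outer approximations `Sʳ_k ⊇ Sʳ` converge in Hausdorff
distance and are uniformly bounded, then the glued sets
`S'_k = {x ∈ X : x_{I r} ∈ Sʳ_k ∀r}` converge in Hausdorff distance to
`S = {x ∈ X : x_{I r} ∈ Sʳ ∀r}`. -/
theorem glued_hausdorff_convergence (n l : ℕ) (X : Set (Fin n → ℝ)) (hX : IsCompact X)
    (I : Fin l → Finset (Fin n))
    (Sr : ∀ r : Fin l, Set ({i // i ∈ I r} → ℝ)) (hSrc : ∀ r, IsCompact (Sr r))
    (Srk : ∀ r : Fin l, ℕ → Set ({i // i ∈ I r} → ℝ))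
    (hSrkc : ∀ r k, IsCompact (Srk r k))
    (houter : ∀ r k, Sr r ⊆ Srk r k)
    (hbdd : ∀ r, ∃ C : ℝ, ∀ k, Srk r k ⊆ Metric.closedBall 0 C)
    (hconv : ∀ r, Filter.Tendsto (fun k => Metric.hausdorffDist (Srk r k) (Sr r))
        Filter.atTop (nhds 0))
    (S : Set (Fin n → ℝ)) (hSc : IsCompact S)
    (hS : S = {x ∈ X | ∀ r : Fin l, (fun i : {i // i ∈ I r} => x i.1) ∈ Sr r}) :
    Filter.Tendsto (fun k => Metric.hausdorffDist
        {x ∈ X | ∀ r : Fin l, (fun i : {i // i ∈ I r} => x i.1) ∈ Srk r k} S)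
      Filter.atTop (nhds 0) :=
  glued_hausdorff_convergence_general n l X hX I Sr hSrc Srk hSrkc houter hconv S hS
end

section
/- Fix a finite set {1,…,n} and X ⊆ ℝⁿ. Let T = {J ⊆ {1,…,n} : the partition {J, Jᶜ} induces a factorization of X}, i.e. X = {x : P_J(x) ∈ P_J(X), P_{Jᶜ}(x) ∈ P_{Jᶜ}(X)}. Then T contains {1,…,n}, is closed under complement, and is closed under intersection (hence also under union); in particular T is a topology on {1,…,n}. -/
/-- `J` together with its complement induces a factorization of `X`:
`X = {x : P_J(x) ∈ P_J(X), P_{Jᶜ}(x) ∈ P_{Jᶜ}(X)}`. -/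
def Factorizes (n : ℕ) (X : Set (Fin n → ℝ)) (J : Set (Fin n)) : Prop :=
  X = {x | (∃ y ∈ X, ∀ i ∈ J, x i = y i) ∧ (∃ y ∈ X, ∀ i ∉ J, x i = y i)}

/-
Only the inclusion `⊇` has content. Closure under complement is the symmetry of the definition.
For `J ∩ K`: if `x` agrees with `y ∈ X` on `J ∩ K` and with `z ∈ X` off it, then the point
`w` equal to `y` on `K` and to `z` off `K` lies in `X` because `K` factorizes, and `x` agrees
with `w` on `J` and with `z` off `J`, so `x ∈ X` because `J` factorizes. Unions follow by
De Morgan.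
-/

namespace Factorizes

variable {n : ℕ} {X : Set (Fin n → ℝ)} {J K : Set (Fin n)}

theorem iff_forall_mem :
    Factorizes n X J ↔ ∀ x : Fin n → ℝ, (∃ y ∈ X, ∀ i ∈ J, x i = y i) →
      (∃ z ∈ X, ∀ i ∉ J, x i = z i) → x ∈ X := by
  refine ⟨fun hJ x hy hz => hJ ▸ ⟨hy, hz⟩, fun h => ?_⟩
  refine Set.Subset.antisymm (fun x hx => ⟨⟨x, hx, fun _ _ => rfl⟩, ⟨x, hx, fun _ _ => rfl⟩⟩) ?_
  rintro x ⟨hy, hz⟩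
  exact h x hy hz

theorem mem (hJ : Factorizes n X J) {x y z : Fin n → ℝ} (hy : y ∈ X) (hz : z ∈ X)
    (hxy : ∀ i ∈ J, x i = y i) (hxz : ∀ i ∉ J, x i = z i) : x ∈ X :=
  iff_forall_mem.mp hJ x ⟨y, hy, hxy⟩ ⟨z, hz, hxz⟩

theorem univ : Factorizes n X Set.univ :=
  iff_forall_mem.mpr fun _ ⟨_, hy, hxy⟩ _ => (funext fun i => hxy i trivial) ▸ hy

theorem compl (hJ : Factorizes n X J) : Factorizes n X Jᶜ :=
  iff_forall_mem.mpr fun _ ⟨_, hy, hxy⟩ ⟨_, hz, hxz⟩ =>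
    hJ.mem hz hy (fun i hi => hxz i (not_not_intro hi)) hxy

theorem inter (hJ : Factorizes n X J) (hK : Factorizes n X K) : Factorizes n X (J ∩ K) := by
  classical
  refine iff_forall_mem.mpr fun x ⟨y, hy, hxy⟩ ⟨z, hz, hxz⟩ => ?_
  have hw : K.piecewise y z ∈ X :=
    hK.mem hy hz (fun i hi => Set.piecewise_eq_of_mem K y z hi)
      (fun i hi => Set.piecewise_eq_of_notMem K y z hi)
  refine hJ.mem hw hz (fun i hiJ => ?_) (fun i hiJ => hxz i fun hi => hiJ hi.1)
  by_cases hiK : i ∈ K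
  · rw [Set.piecewise_eq_of_mem K y z hiK]
    exact hxy i ⟨hiJ, hiK⟩
  · rw [Set.piecewise_eq_of_notMem K y z hiK]
    exact hxz i fun hi => hiK hi.2

theorem union (hJ : Factorizes n X J) (hK : Factorizes n X K) : Factorizes n X (J ∪ K) := by
  simpa only [Set.compl_inter, compl_compl] using (hJ.compl.inter hK.compl).compl

end Factorizes

/-- the collection `T = {J : {J,Jᶜ} induces a factorization of X}` contains
`{1,…,n}`, is closed under complement, intersection and union — hence it is a topology
on `{1,…,n}`. -/
theorem factorizing_sets_form_topology (n : ℕ) (X : Set (Fin n → ℝ)) :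
    Factorizes n X Set.univ ∧
    (∀ J, Factorizes n X J → Factorizes n X Jᶜ) ∧
    (∀ J K, Factorizes n X J → Factorizes n X K → Factorizes n X (J ∩ K)) ∧
    (∀ J K, Factorizes n X J → Factorizes n X K → Factorizes n X (J ∪ K)) :=
  ⟨Factorizes.univ, fun _ => Factorizes.compl, fun _ _ => Factorizes.inter,
    fun _ _ => Factorizes.union⟩
end

section
/- For any X ⊆ ℝⁿ there exists a minimal (finest) factorizing partition: a partition J₁,…,J_N of {1,…,n} inducing a factorization of X such that for every other partition I₁,…,I_M inducing a factorization of X, each I_i is a union of some of the J_k, namely I_i = ⋃_{k : J_k ⊆ I_i} J_k. -/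
/-- A collection of blocks `C` (a partition of the index set) induces a factorization of
`X ⊆ ℝⁿ` if `X = {x : P_J(x) ∈ P_J(X) for every block J ∈ C}`. -/
def InducesFactorization (n : ℕ) (X : Set (Fin n → ℝ)) (C : Set (Set (Fin n))) : Prop :=
  X = {x | ∀ J ∈ C, ∃ y ∈ X, ∀ i ∈ J, x i = y i}

/-!
Call `S` swap-closed for `X` if replacing the `S`-coordinates of a point of `X` by those of
another point of `X` stays in `X`. A partition factorizes a nonempty `X` exactly when each of its
blocks is swap-closed, and swap-closed sets are closed under complements and finite intersections.
Hence the intersection of all swap-closed sets containing `i` is itself swap-closed; these smallest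
swap-closed sets partition the coordinates, factorize `X`, and lie inside the block containing
`i` of any other factorizing partition.
-/

open Set

variable {ι α : Type*} {X : Set (ι → α)} {S T : Set ι} {𝒮 : Set (Set ι)}

def IsSwapClosed (X : Set (ι → α)) (S : Set ι) : Prop :=
  ∀ x ∈ X, ∀ y ∈ X, ∃ z ∈ X, EqOn z y S ∧ EqOn z x Sᶜ

namespace IsSwapClosed

theorem univ (X : Set (ι → α)) : IsSwapClosed X univ :=
  fun _ _ y hy => ⟨y, hy, eqOn_refl y _, by simp⟩

theorem compl (h : IsSwapClosed X S) : IsSwapClosed X Sᶜ := fun x hx y hy =>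
  let ⟨z, hz, hzx, hzy⟩ := h y hy x hx
  ⟨z, hz, hzy, by rwa [compl_compl]⟩

theorem inter (hS : IsSwapClosed X S) (hT : IsSwapClosed X T) : IsSwapClosed X (S ∩ T) := by
  intro x hx y hy
  obtain ⟨w, hw, hwy, hwx⟩ := hT x hx y hy
  obtain ⟨z, hz, hzw, hzx⟩ := hS x hx w hw
  refine ⟨z, hz, fun i hi => (hzw hi.1).trans (hwy hi.2), fun i hi => ?_⟩
  by_cases hiS : i ∈ S
  · exact (hzw hiS).trans (hwx fun hiT => hi ⟨hiS, hiT⟩)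
  · exact hzx hiS

theorem sInter (h𝒮 : 𝒮.Finite) (h : ∀ S ∈ 𝒮, IsSwapClosed X S) : IsSwapClosed X (⋂₀ 𝒮) := by
  induction 𝒮, h𝒮 using Set.Finite.induction_on with
  | empty => simpa using univ X
  | insert _ _ ih =>
    rw [sInter_insert]
    exact (h _ (mem_insert _ _)).inter (ih fun S hS => h S (mem_insert_of_mem _ hS))

end IsSwapClosed

theorem exists_mem_eqOn_sUnion (hX : X.Nonempty) (h𝒮 : 𝒮.Finite)
    (hclosed : ∀ S ∈ 𝒮, IsSwapClosed X S) {x : ι → α} (hx : ∀ S ∈ 𝒮, ∃ y ∈ X, EqOn x y S) :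
    ∃ z ∈ X, EqOn x z (⋃₀ 𝒮) := by
  induction 𝒮, h𝒮 using Set.Finite.induction_on with
  | empty => exact ⟨hX.some, hX.some_mem, by simp⟩
  | @insert S 𝒯 _ _ ih =>
    obtain ⟨z, hz, hxz⟩ := ih (fun T hT => hclosed T (mem_insert_of_mem _ hT))
      (fun T hT => hx T (mem_insert_of_mem _ hT))
    obtain ⟨y, hy, hxy⟩ := hx S (mem_insert _ _)
    obtain ⟨w, hw, hwy, hwz⟩ := hclosed S (mem_insert _ _) z hz y hy
    refine ⟨w, hw, ?_⟩
    rw [sUnion_insert]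
    intro i hi
    by_cases hiS : i ∈ S
    · exact (hxy hiS).trans (hwy hiS).symm
    · exact (hxz (hi.resolve_left hiS)).trans (hwz hiS).symm

def swapSetoid (X : Set (ι → α)) : Setoid ι :=
  Setoid.ker fun i => {S | IsSwapClosed X S ∧ i ∈ S}

theorem swapSetoid_class_eq (i : ι) :
    {j | swapSetoid X j i} = ⋂₀ {S | IsSwapClosed X S ∧ i ∈ S} := by
  ext j
  rw [mem_ofPred_eq, swapSetoid, Setoid.ker_def, Set.ext_iff, mem_sInter]
  refine ⟨fun h S hS => ((h S).2 hS).2, fun h S => ⟨fun hS => ⟨hS.1, ?_⟩,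
    fun hS => ⟨hS.1, h S hS⟩⟩⟩
  by_contra hi
  exact h Sᶜ ⟨hS.1.compl, hi⟩ hS.2

theorem isSwapClosed_of_mem_classes_swapSetoid [Finite ι] {J : Set ι}
    (hJ : J ∈ (swapSetoid X).classes) : IsSwapClosed X J := by
  obtain ⟨i, rfl⟩ := hJ
  rw [swapSetoid_class_eq]
  exact IsSwapClosed.sInter (toFinite _) fun S hS => hS.1

theorem InducesFactorization.isSwapClosed {n : ℕ} {X : Set (Fin n → ℝ)} {C : Set (Set (Fin n))}
    (hX : InducesFactorization n X C) (hC : C.PairwiseDisjoint id) {I : Set (Fin n)}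
    (hI : I ∈ C) : IsSwapClosed X I := by
  classical
  intro x hx y hy
  refine ⟨I.piecewise y x, ?_, piecewise_eqOn I y x, piecewise_eqOn_compl I y x⟩
  rw [hX]
  intro J hJ
  by_cases hJI : J = I
  · subst hJI
    exact ⟨y, hy, piecewise_eqOn J y x⟩
  · exact ⟨x, hx, (piecewise_eqOn_compl I y x).mono (hC hJ hI hJI).subset_compl_right⟩

theorem inducesFactorization_of_isSwapClosed {n : ℕ} {X : Set (Fin n → ℝ)}
    {C : Set (Set (Fin n))} (hX : X.Nonempty) (hC : ⋃₀ C = univ)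
    (h : ∀ J ∈ C, IsSwapClosed X J) : InducesFactorization n X C := by
  refine Subset.antisymm (fun x hx J _ => ⟨x, hx, fun _ _ => rfl⟩) fun x hx => ?_
  obtain ⟨z, hz, hxz⟩ := exists_mem_eqOn_sUnion hX (toFinite C) h hx
  rw [hC, eqOn_univ] at hxz
  exact hxz ▸ hz

/-- there exists a minimal (finest) factorizing partition `C` of
`{1,…,n}` for `X`: any other factorizing partition `D` has each of its blocks equal to
the union of the blocks of `C` it contains. -/
theorem exists_minimal_factorizing_partition (n : ℕ) (X : Set (Fin n → ℝ))
    (hX : X.Nonempty) :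
    ∃ C : Set (Set (Fin n)), Setoid.IsPartition C ∧ InducesFactorization n X C ∧
      ∀ D : Set (Set (Fin n)), Setoid.IsPartition D → InducesFactorization n X D →
        ∀ I ∈ D, I = ⋃₀ {J | J ∈ C ∧ J ⊆ I} := by
  refine ⟨_, Setoid.isPartition_classes (swapSetoid X),
    inducesFactorization_of_isSwapClosed hX (Setoid.isPartition_classes _).sUnion_eq_univ
      fun J hJ => isSwapClosed_of_mem_classes_swapSetoid hJ, ?_⟩
  intro D hD hDX I hI
  refine Subset.antisymm (fun i hi => ⟨_, ⟨Setoid.mem_classes _ i, ?_⟩, (swapSetoid X).refl' i⟩)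
    (sUnion_subset fun J hJ => hJ.2)
  rw [swapSetoid_class_eq]
  exact sInter_subset_of_mem ⟨hDX.isSwapClosed hD.pairwiseDisjoint hI, hi⟩
end

section
/- If J₁, J₂ ∈ T (both induce two-block factorizations of X as above), then J = J₁ ∩ J₂ together with its complement induces a factorization of X: with Z₁ = P_J(X) and Z₂ = P_{Jᶜ}(X), one has X = {x ∈ ℝⁿ : P_J(x) ∈ Z₁, P_{Jᶜ}(x) ∈ Z₂}. -/
/-! Splicing: `J` factorizes `X` exactly when `X` is closed under taking the `J`-coordinates of
one point and the `Jᶜ`-coordinates of another. Splicing along `J₁ ∩ J₂` is splicing along `J₁`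
and then along `J₂`, so the property passes to intersections. -/

theorem Set.piecewise_inter {α : Type*} {β : α → Sort*} (s t : Set α)
    [∀ i, Decidable (i ∈ s)] [∀ i, Decidable (i ∈ t)] [∀ i, Decidable (i ∈ s ∩ t)]
    (f g : ∀ i, β i) :
    (s ∩ t).piecewise f g = t.piecewise (s.piecewise f g) g := by
  funext i
  by_cases hs : i ∈ s <;> by_cases ht : i ∈ t <;> simp [Set.piecewise, hs, ht]

open Classical in
theorem factorizes_iff_piecewise_mem {n : ℕ} {X : Set (Fin n → ℝ)} {J : Set (Fin n)} :
    Factorizes n X J ↔ ∀ y ∈ X, ∀ z ∈ X, J.piecewise y z ∈ X := by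
  constructor
  · intro hJ y hy z hz
    rw [hJ]
    exact ⟨⟨y, hy, fun i hi => if_pos hi⟩, ⟨z, hz, fun i hi => if_neg hi⟩⟩
  · intro hX
    ext x
    constructor
    · intro hx
      exact ⟨⟨x, hx, fun _ _ => rfl⟩, ⟨x, hx, fun _ _ => rfl⟩⟩
    · rintro ⟨⟨y, hy, hxy⟩, ⟨z, hz, hxz⟩⟩
      have hx : x = J.piecewise y z := by
        funext i
        by_cases hi : i ∈ J
        · rw [Set.piecewise_eq_of_mem _ _ _ hi, hxy i hi]
        · rw [Set.piecewise_eq_of_notMem _ _ _ hi, hxz i hi]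
      exact hx ▸ hX y hy z hz

open Classical in
theorem Factorizes.inter_s13 {n : ℕ} {X : Set (Fin n → ℝ)} {J₁ J₂ : Set (Fin n)}
    (h₁ : Factorizes n X J₁) (h₂ : Factorizes n X J₂) : Factorizes n X (J₁ ∩ J₂) := by
  rw [factorizes_iff_piecewise_mem] at *
  intro y hy z hz
  rw [Set.piecewise_inter]
  exact h₂ _ (h₁ y hy z hz) z hz

/-- if `J₁` and `J₂` both induce two-block factorizations of `X`, then so
does `J = J₁ ∩ J₂`: with `Z₁ = P_J(X)`, `Z₂ = P_{Jᶜ}(X)` one has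
`X = {x : P_J(x) ∈ Z₁, P_{Jᶜ}(x) ∈ Z₂}`. -/
theorem factorizes_inter (n : ℕ) (X : Set (Fin n → ℝ)) (J₁ J₂ : Set (Fin n))
    (h₁ : Factorizes n X J₁) (h₂ : Factorizes n X J₂) :
    X = {x | (∃ y ∈ X, ∀ i ∈ J₁ ∩ J₂, x i = y i) ∧
             (∃ y ∈ X, ∀ i ∉ J₁ ∩ J₂, x i = y i)} :=
  h₁.inter_s13 h₂
end

section
/- The set of states indexed by I ⊆ {1,…,n} forms a subsystem (f_I ∘ P_I = P_I ∘ f) if and only if I is 'closed under predecessors' in the sparsity graph: whenever j ∈ I and f_j depends on x_i, then i ∈ I. Consequently, for each node x_j, the past P(x_j) induces the smallest subsystem containing x_j. -/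
/-!
Each `f_j`, `j ∈ I`, has to depend only on the blocks in `I`. Over finitely many blocks
this holds as soon as `f_j` is constant in every single block outside `I`, because the
blocks outside `I` can be changed one at a time. So `I` is a
subsystem exactly when no edge of the sparsity graph enters `I` from outside, and the
smallest such set containing `j` is the set of nodes from which `j` can be reached.
-/

/-- Direct dependence: `f_j` depends on the block `x_i` (is not constant in it). -/
def BlockDep (N : ℕ) (d : Fin N → ℕ)
    (f : ∀ j : Fin N, (∀ k, Fin (d k) → ℝ) → (Fin (d j) → ℝ)) (i j : Fin N) : Prop :=
  ∃ x y : ∀ k, Fin (d k) → ℝ, (∀ k, k ≠ i → x k = y k) ∧ f j x ≠ f j y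

/-- `I` induces a subsystem: the components `f_I` depend only on the variables `x_I`
(`f_I ∘ P_I = P_I ∘ f`). -/
def IsSubsystem (N : ℕ) (d : Fin N → ℕ)
    (f : ∀ j : Fin N, (∀ k, Fin (d k) → ℝ) → (Fin (d j) → ℝ)) (I : Set (Fin N)) : Prop :=
  ∀ x y : ∀ k, Fin (d k) → ℝ, (∀ j ∈ I, x j = y j) → ∀ j ∈ I, f j x = f j y

open Function Relation

section DependsOn

variable {ι : Type*} {α : ι → Type*} {β : Type*} {g : (∀ i, α i) → β} {s : Set ι}

theorem DependsOn.of_insert_of_compl_singleton {i : ι} (hs : DependsOn g (insert i s))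
    (hi : DependsOn g {i}ᶜ) : DependsOn g s := by
  classical
  intro x y hxy
  calc g x = g (Function.update x i (y i)) := hi fun k hk => (update_of_ne hk _ x).symm
    _ = g y := hs fun k hk => by
      by_cases hki : k = i
      · subst hki; exact update_self k (y k) x
      · rw [update_of_ne hki]; exact hxy k (hk.resolve_left hki)

theorem dependsOn_iff_forall_dependsOn_compl_singleton [Finite ι] :
    DependsOn g s ↔ ∀ i ∉ s, DependsOn g {i}ᶜ := by
  refine ⟨fun h i hi => h.mono (Set.subset_compl_singleton_iff.mpr hi), fun h => ?_⟩
  suffices ∀ t : Set ι, t.Finite → t ⊆ sᶜ → DependsOn g (s ∪ t) → DependsOn g s by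
    exact this sᶜ (Set.toFinite _) subset_rfl (by simpa using dependsOn_univ g)
  intro t ht
  induction t, ht using Set.Finite.induction_on with
  | empty => simp
  | @insert a t _ _ ih =>
    intro hsub hdep
    rw [Set.union_insert] at hdep
    exact ih ((Set.subset_insert a t).trans hsub)
      (hdep.of_insert_of_compl_singleton (h a (hsub (Set.mem_insert a t))))

end DependsOn

section ReflTransGen

variable {ι : Type*} {r : ι → ι → Prop} {I : Set ι}

theorem Relation.ReflTransGen.mem_of_forall_rel_mem (hI : ∀ k ∈ I, ∀ i, r i k → i ∈ I)
    {i j : ι} (h : ReflTransGen r i j) (hj : j ∈ I) : i ∈ I := by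
  induction h using ReflTransGen.head_induction_on with
  | refl => exact hj
  | head hik _ ih => exact hI _ ih _ hik

end ReflTransGen

section Subsystem

variable {N : ℕ} {d : Fin N → ℕ} {f : ∀ j : Fin N, (∀ k, Fin (d k) → ℝ) → (Fin (d j) → ℝ)}

theorem isSubsystem_iff_forall_dependsOn {I : Set (Fin N)} :
    IsSubsystem N d f I ↔ ∀ j ∈ I, DependsOn (f j) I :=
  ⟨fun h j hj _ _ hxy => h _ _ hxy j hj, fun h _ _ hxy j hj => h j hj hxy⟩

theorem blockDep_iff_not_dependsOn_compl_singleton {i j : Fin N} :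
    BlockDep N d f i j ↔ ¬ DependsOn (f j) {i}ᶜ := by
  simp [BlockDep, DependsOn]

theorem isSubsystem_iff_forall_blockDep_mem {I : Set (Fin N)} :
    IsSubsystem N d f I ↔ ∀ j ∈ I, ∀ i, BlockDep N d f i j → i ∈ I := by
  rw [isSubsystem_iff_forall_dependsOn]
  refine forall₂_congr fun j _ => ?_
  rw [dependsOn_iff_forall_dependsOn_compl_singleton]
  exact forall_congr' fun i => by rw [blockDep_iff_not_dependsOn_compl_singleton, not_imp_comm]

end Subsystem

/-- `I` induces a subsystem iff `I` is closed under predecessors in the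
sparsity graph; consequently, for every node `j` the past `P(x_j)` induces the smallest
subsystem containing `j`. -/
theorem subsystem_iff_closed_under_predecessors (N : ℕ) (d : Fin N → ℕ)
    (f : ∀ j : Fin N, (∀ k, Fin (d k) → ℝ) → (Fin (d j) → ℝ)) :
    (∀ I : Set (Fin N),
      IsSubsystem N d f I ↔ ∀ j ∈ I, ∀ i, BlockDep N d f i j → i ∈ I) ∧
    (∀ j : Fin N,
      IsSubsystem N d f {i | Relation.ReflTransGen (BlockDep N d f) i j} ∧
      j ∈ {i | Relation.ReflTransGen (BlockDep N d f) i j} ∧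
      ∀ I : Set (Fin N), IsSubsystem N d f I → j ∈ I →
        {i | Relation.ReflTransGen (BlockDep N d f) i j} ⊆ I) := by
  refine ⟨fun I => isSubsystem_iff_forall_blockDep_mem, fun j => ⟨?_, ReflTransGen.refl, ?_⟩⟩
  · exact isSubsystem_iff_forall_blockDep_mem.mpr fun _ hk _ hik => ReflTransGen.head hik hk
  · intro I hI hj _ hi
    exact hi.mem_of_forall_rel_mem (isSubsystem_iff_forall_blockDep_mem.mp hI) hj
end
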